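/- Let N ≥ 2 and T ≥ 1, set P = N+T and L = NP, let I ⊆ Z_P with |I| = T, and suppose D := Z_P \ I is a (P, N, λ) cyclic difference set over Z_P, i.e., for every nonzero ε ∈ Z_P, |(ε + D) ∩ D| = λ (so λ = N(N−1)/(P−1)). Write D = {l_0 < … < l_{N-1}}, let g : Z_N → Z_N be a permutation, define û_{Pr+l_t} = √(P/N)·ω_N^{r·g(t)}·ω_{NP}^{l_t·g(t)} and û_{Pr+s} = 0 for s ∈ I, and let U be the inverse unitary DFT of Û. Then for every τ = N·b with 0 < τ < L and P not dividing b, |θ_U(τ)|² = P²(N − λ); consequently max_{0<τ<L} |θ_U(τ)| = P·√(N(P−N)/(P−1)). -/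

import Mathlib

/-- Periodic cross-correlation of two length-`L` complex sequences. -/
noncomputable def pcc (L : ℕ) (c d : ℕ → ℂ) (τ : ℕ) : ℂ :=
  ∑ t ∈ Finset.range L, c t * (starRingEnd ℂ) (d ((t + τ) % L))

/-- Inverse unitary DFT of a length-`L` complex sequence. -/
noncomputable def iudft (L : ℕ) (chat : ℕ → ℂ) (t : ℕ) : ℂ :=
  ((Real.sqrt L : ℝ) : ℂ)⁻¹ * ∑ n ∈ Finset.range L,
    chat n * Complex.exp (2 * (Real.pi : ℂ) * Complex.I * (n : ℂ) * (t : ℂ) / (L : ℂ))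

/-- The frequency-domain sequence of Construction 3: writing `n = P·r + s`
(`r = n/P`, `s = n%P`), `û_{Pr+l_t} = √(P/N)·ω_N^{r·g(t)}·ω_{NP}^{l_t·g(t)}` for the
increasing enumeration `l` of the admissible carriers, and `û_{Pr+s} = 0` for
forbidden `s ∈ I` (no `t` matches, so the sum below is empty). -/
noncomputable def uhatG (N P : ℕ) (l g : Fin N → ℕ) (n : ℕ) : ℂ :=
  ∑ t : Fin N,
    if l t = n % P then
      (Real.sqrt ((P : ℝ) / (N : ℝ)) : ℂ) *
        Complex.exp (2 * (Real.pi : ℂ) * Complex.I *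
          (((n / P) * g t : ℕ) : ℂ) / (N : ℂ)) *
        Complex.exp (2 * (Real.pi : ℂ) * Complex.I *
          ((l t * g t : ℕ) : ℂ) / ((N * P : ℕ) : ℂ))
    else 0

/- ------------------ auxiliary lemmas ------------------ -/

noncomputable def eL (M : ℕ) (m : ℤ) : ℂ :=
  Complex.exp (2 * (Real.pi : ℂ) * Complex.I * (m : ℂ) / (M : ℂ))

lemma eL_add (M : ℕ) (a b : ℤ) : eL M (a + b) = eL M a * eL M b := by
  rw [eL, eL, eL, ← Complex.exp_add]
  congr 1
  push_cast
  ring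

lemma eL_zero (M : ℕ) : eL M 0 = 1 := by simp [eL]

lemma eL_conj (M : ℕ) (m : ℤ) : (starRingEnd ℂ) (eL M m) = eL M (-m) := by
  rw [eL, eL, ← Complex.exp_conj]
  congr 1
  simp only [map_div₀, map_mul, Complex.conj_I, Complex.conj_ofNat,
    Complex.conj_ofReal, map_intCast, map_natCast]
  push_cast
  ring

lemma eL_mul_self (M : ℕ) (hM : M ≠ 0) (k : ℤ) : eL M ((M : ℤ) * k) = 1 := by
  rw [eL]
  rw [show 2 * (Real.pi : ℂ) * Complex.I * (((M : ℤ) * k : ℤ) : ℂ) / (M : ℂ)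
      = (k : ℂ) * (2 * (Real.pi : ℂ) * Complex.I) by
    have : (M : ℂ) ≠ 0 := by exact_mod_cast hM
    field_simp
    push_cast
    ring]
  exact Complex.exp_int_mul_two_pi_mul_I k

lemma eL_period (M : ℕ) (hM : M ≠ 0) (m k : ℤ) : eL M (m + (M : ℤ) * k) = eL M m := by
  rw [eL_add, eL_mul_self M hM, mul_one]

lemma eL_mul_left (N M : ℕ) (hN : N ≠ 0) (hM : M ≠ 0) (x : ℤ) :
    eL (N * M) ((N : ℤ) * x) = eL M x := by
  rw [eL, eL]
  congr 1
  have h1 : (N : ℂ) ≠ 0 := by exact_mod_cast hN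
  have h2 : (M : ℂ) ≠ 0 := by exact_mod_cast hM
  field_simp
  push_cast
  ring

lemma eL_pow (M : ℕ) (k : ℤ) (t : ℕ) : eL M (k * t) = (eL M k) ^ t := by
  rw [eL, eL, ← Complex.exp_nat_mul]
  congr 1
  push_cast
  ring

lemma eL_orth (M : ℕ) (hM : 0 < M) (k : ℤ) :
    ∑ t ∈ Finset.range M, eL M (k * t) = if (M : ℤ) ∣ k then (M : ℂ) else 0 := by
  simp only [eL_pow]
  by_cases h : (M : ℤ) ∣ k
  · obtain ⟨j, rfl⟩ := h
    rw [eL_mul_self M hM.ne']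
    simp
  · rw [if_neg h]
    have hz : eL M k ≠ 1 := by
      intro hz
      rw [eL, Complex.exp_eq_one_iff] at hz
      obtain ⟨n, hn⟩ := hz
      have hMC : (M : ℂ) ≠ 0 := by exact_mod_cast hM.ne'
      have hpi : (2 * (Real.pi : ℂ) * Complex.I) ≠ 0 := by
        simp [Real.pi_ne_zero, Complex.I_ne_zero]
      have : (k : ℂ) = (n : ℂ) * (M : ℂ) := by
        field_simp at hn
        apply mul_right_cancel₀ hpi
        rw [show (k : ℂ) * (2 * (Real.pi : ℂ) * Complex.I)
            = 2 * (Real.pi : ℂ) * Complex.I * (k : ℂ) by ring, hn]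
        ring
      have : k = n * M := by exact_mod_cast this
      exact h ⟨n, by linarith⟩
    have hpow : eL M k ^ M = 1 := by
      rw [← eL_pow, mul_comm, eL_mul_self M hM.ne']
    rw [geom_sum_eq hz, hpow]
    simp

lemma mod_two_cases (a P : ℕ) (h : a < 2 * P) : a % P = if a < P then a else a - P := by
  split
  · exact Nat.mod_eq_of_lt ‹_›
  · rw [Nat.mod_eq_sub_mod (by omega), Nat.mod_eq_of_lt (by omega)]

lemma sum_range_mul' {β : Type*} [AddCommMonoid β] (N P : ℕ) (hP : 0 < P) (f : ℕ → β) :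
    ∑ n ∈ Finset.range (N * P), f n
      = ∑ r ∈ Finset.range N, ∑ s ∈ Finset.range P, f (P * r + s) := by
  rw [← Finset.sum_product']
  apply Finset.sum_nbij' (i := fun n => (n / P, n % P)) (j := fun p => P * p.1 + p.2)
  · intro n hn
    simp only [Finset.mem_range] at hn
    simp only [Finset.mem_product, Finset.mem_range]
    refine ⟨Nat.div_lt_of_lt_mul ?_, Nat.mod_lt _ hP⟩
    rw [Nat.mul_comm]; exact hn
  · intro p hp
    simp only [Finset.mem_product, Finset.mem_range] at hp
    simp only [Finset.mem_range]
    calc P * p.1 + p.2 < P * p.1 + P := by omega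
    _ = P * (p.1 + 1) := by ring
    _ ≤ P * N := Nat.mul_le_mul_left _ (by omega)
    _ = N * P := Nat.mul_comm _ _
  · intro n _; exact Nat.div_add_mod n P
  · intro p hp
    simp only [Finset.mem_product, Finset.mem_range] at hp
    have h1 : (P * p.1 + p.2) / P = p.1 := by
      rw [Nat.mul_add_div hP, Nat.div_eq_of_lt hp.2]; omega
    have h2 : (P * p.1 + p.2) % P = p.2 := by
      rw [Nat.mul_add_mod, Nat.mod_eq_of_lt hp.2]
    simp [h1, h2]
  · intro n _; exact congrArg f (Nat.div_add_mod n P).symm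

lemma sum_range_shift_mod {β : Type*} [AddCommMonoid β] (P : ℕ) (hP : 0 < P) (s : ℕ)
    (hs : s < P) (h : ℕ → β) :
    ∑ ε ∈ Finset.range P, h ((s + ε) % P) = ∑ x ∈ Finset.range P, h x := by
  apply Finset.sum_nbij' (i := fun ε => (s + ε) % P) (j := fun x => (x + P - s) % P)
  · intro ε hε; exact Finset.mem_range.mpr (Nat.mod_lt _ hP)
  · intro x hx; exact Finset.mem_range.mpr (Nat.mod_lt _ hP)
  · intro ε hε
    simp only [Finset.mem_range] at hε
    rw [mod_two_cases (s + ε) P (by omega)]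
    split
    · rw [mod_two_cases (s + ε + P - s) P (by omega)]; split <;> omega
    · rw [mod_two_cases (s + ε - P + P - s) P (by omega)]; split <;> omega
  · intro x hx
    simp only [Finset.mem_range] at hx
    rw [mod_two_cases (x + P - s) P (by omega)]
    split
    · rw [mod_two_cases (s + (x + P - s)) P (by omega)]; split <;> omega
    · rw [mod_two_cases (s + (x + P - s - P)) P (by omega)]; split <;> omega
  · intro ε _; rfl

lemma double_sum_shift {β : Type*} [AddCommMonoid β] (P : ℕ) (hP : 0 < P)
    (D : Finset ℕ) (hD : D ⊆ Finset.range P) (F : ℕ → ℕ → β) :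
    ∑ s ∈ D, ∑ s' ∈ D, F s s'
      = ∑ ε ∈ Finset.range P, ∑ s ∈ D.filter (fun s => (s + ε) % P ∈ D), F s ((s + ε) % P) := by
  have key : ∀ s ∈ D, (∑ s' ∈ D, F s s')
      = ∑ ε ∈ Finset.range P, (if (s + ε) % P ∈ D then F s ((s + ε) % P) else 0) := by
    intro s hs
    have hsP : s < P := Finset.mem_range.mp (hD hs)
    rw [show (∑ ε ∈ Finset.range P, if (s + ε) % P ∈ D then F s ((s + ε) % P) else 0)
        = ∑ x ∈ Finset.range P, if x ∈ D then F s x else 0 from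
      sum_range_shift_mod P hP s hsP (fun x => if x ∈ D then F s x else 0),
      Finset.sum_ite_mem, Finset.inter_eq_right.mpr hD]
  rw [Finset.sum_congr rfl key, Finset.sum_comm]
  exact Finset.sum_congr rfl fun ε _ => (Finset.sum_filter _ _).symm

lemma pcc_iudft (L : ℕ) (hL : 0 < L) (c : ℕ → ℂ) (τ : ℕ) :
    pcc L (iudft L c) (iudft L c) τ
      = ∑ n ∈ Finset.range L, (c n * (starRingEnd ℂ) (c n)) * eL L (-((n : ℤ) * τ)) := by
  have hLC : (L : ℂ) ≠ 0 := by exact_mod_cast hL.ne'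
  have hexp : ∀ n t : ℕ,
      Complex.exp (2 * (Real.pi : ℂ) * Complex.I * (n : ℂ) * (t : ℂ) / (L : ℂ))
        = eL L ((n : ℤ) * t) := by
    intro n t; rw [eL]; congr 1; push_cast; ring
  set A : ℂ := ((Real.sqrt L : ℝ) : ℂ)⁻¹ with hA
  have hAconj : (starRingEnd ℂ) A = A := by
    rw [hA, map_inv₀, Complex.conj_ofReal]
  have hAA : A * A * (L : ℂ) = 1 := by
    rw [hA, ← mul_inv, ← Complex.ofReal_mul, Real.mul_self_sqrt (Nat.cast_nonneg L)]
    rw [show ((L : ℝ) : ℂ) = (L : ℂ) by norm_cast]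
    exact inv_mul_cancel₀ hLC
  have hu : ∀ t : ℕ, iudft L c t = A * ∑ n ∈ Finset.range L, c n * eL L ((n : ℤ) * t) := by
    intro t; rw [iudft]; congr 1; exact Finset.sum_congr rfl fun n _ => by rw [hexp]
  have huconj : ∀ t : ℕ, (starRingEnd ℂ) (iudft L c t)
      = A * ∑ m ∈ Finset.range L, (starRingEnd ℂ) (c m) * eL L (-((m : ℤ) * t)) := by
    intro t
    rw [hu, map_mul, hAconj, map_sum]
    congr 1
    exact Finset.sum_congr rfl fun m _ => by rw [map_mul, eL_conj]
  have hmod : ∀ m t : ℕ, eL L (-((m : ℤ) * (((t + τ) % L : ℕ) : ℤ)))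
      = eL L (-((m : ℤ) * ((t + τ : ℕ) : ℤ))) := by
    intro m t
    have h := Nat.div_add_mod (t + τ) L
    have hZ : (L : ℤ) * (((t + τ) / L : ℕ) : ℤ) + (((t + τ) % L : ℕ) : ℤ)
        = ((t + τ : ℕ) : ℤ) := by exact_mod_cast h
    have harg : -((m : ℤ) * (((t + τ) % L : ℕ) : ℤ))
        = -((m : ℤ) * ((t + τ : ℕ) : ℤ)) + (L : ℤ) * ((m : ℤ) * (((t + τ) / L : ℕ) : ℤ)) := by
      linear_combination (-(m : ℤ)) * hZ
    rw [harg, eL_period L hL.ne']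
  have hsplit : ∀ n m t : ℕ, eL L ((n : ℤ) * t) * eL L (-((m : ℤ) * ((t + τ : ℕ) : ℤ)))
      = eL L (-((m : ℤ) * τ)) * eL L (((n : ℤ) - m) * t) := by
    intro n m t
    rw [← eL_add, ← eL_add]
    congr 1
    push_cast
    ring
  set K : ℕ → ℕ → ℂ := fun n m => c n * (starRingEnd ℂ) (c m) * eL L (-((m : ℤ) * τ)) with hK
  have step1 : pcc L (iudft L c) (iudft L c) τ
      = (A * A) * ∑ t ∈ Finset.range L, ∑ n ∈ Finset.range L, ∑ m ∈ Finset.range L,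
          K n m * eL L (((n : ℤ) - m) * t) := by
    rw [pcc, Finset.mul_sum]
    refine Finset.sum_congr rfl fun t ht => ?_
    rw [hu t, huconj ((t + τ) % L), mul_mul_mul_comm]
    congr 1
    rw [Finset.sum_mul_sum]
    refine Finset.sum_congr rfl fun n hn => Finset.sum_congr rfl fun m hm => ?_
    rw [hmod m t]
    calc c n * eL L ((n : ℤ) * t) * ((starRingEnd ℂ) (c m) * eL L (-((m : ℤ) * ((t + τ : ℕ) : ℤ))))
        = (c n * (starRingEnd ℂ) (c m))
            * (eL L ((n : ℤ) * t) * eL L (-((m : ℤ) * ((t + τ : ℕ) : ℤ)))) := by ring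
      _ = K n m * eL L (((n : ℤ) - m) * t) := by rw [hsplit n m t, hK]; ring
  have step2 : ∑ t ∈ Finset.range L, ∑ n ∈ Finset.range L, ∑ m ∈ Finset.range L,
        K n m * eL L (((n : ℤ) - m) * t)
      = ∑ n ∈ Finset.range L, ∑ m ∈ Finset.range L,
          K n m * (if (L : ℤ) ∣ ((n : ℤ) - m) then (L : ℂ) else 0) := by
    rw [Finset.sum_comm]
    refine Finset.sum_congr rfl fun n hn => ?_
    rw [Finset.sum_comm]
    refine Finset.sum_congr rfl fun m hm => ?_
    rw [← Finset.mul_sum, eL_orth L hL]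
  have step3 : ∑ n ∈ Finset.range L, ∑ m ∈ Finset.range L,
        K n m * (if (L : ℤ) ∣ ((n : ℤ) - m) then (L : ℂ) else 0)
      = ∑ n ∈ Finset.range L, K n n * L := by
    refine Finset.sum_congr rfl fun n hn => ?_
    have hn' := Finset.mem_range.mp hn
    calc ∑ m ∈ Finset.range L, K n m * (if (L : ℤ) ∣ ((n : ℤ) - m) then (L : ℂ) else 0)
        = ∑ m ∈ Finset.range L, (if m = n then K n m * L else 0) := by
          refine Finset.sum_congr rfl fun m hm => ?_
          have hm' := Finset.mem_range.mp hm
          by_cases h : m = n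
          · subst h; simp
          · rw [if_neg h, if_neg, mul_zero]
            intro hdvd
            obtain ⟨k, hk⟩ := hdvd
            have h1 : -(L : ℤ) < (L : ℤ) * k := by rw [← hk]; omega
            have h2 : (L : ℤ) * k < L := by rw [← hk]; omega
            have hLz : (0 : ℤ) < L := by exact_mod_cast hL
            have hk0 : k = 0 := by
              by_contra hk0
              rcases lt_or_gt_of_ne hk0 with hlt | hgt
              · nlinarith
              · nlinarith
            rw [hk0, mul_zero] at hk
            exact h (by omega)
      _ = if n ∈ Finset.range L then K n n * L else 0 := Finset.sum_ite_eq' _ _ _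
      _ = K n n * L := by rw [if_pos hn]
  rw [step1, step2, step3, Finset.mul_sum]
  refine Finset.sum_congr rfl fun n hn => ?_
  calc A * A * (K n n * L) = K n n * (A * A * L) := by ring
    _ = K n n := by rw [hAA, mul_one]
    _ = c n * (starRingEnd ℂ) (c n) * eL L (-((n : ℤ) * τ)) := by rw [hK]

lemma uhatG_mul_conj (N P : ℕ) (hN : 0 < N) (hP : 0 < P)
    (l : Fin N → ℕ) (hl : Function.Injective l) (g : Fin N → ℕ) (n : ℕ) :
    uhatG N P l g n * (starRingEnd ℂ) (uhatG N P l g n)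
      = if ∃ t, l t = n % P then (((P : ℝ) / (N : ℝ) : ℝ) : ℂ) else 0 := by
  by_cases h : ∃ t, l t = n % P
  · obtain ⟨t₀, ht₀⟩ := h
    have hval : uhatG N P l g n
        = (Real.sqrt ((P : ℝ) / (N : ℝ)) : ℂ) * eL N (((n / P) * g t₀ : ℕ) : ℤ)
            * eL (N * P) ((l t₀ * g t₀ : ℕ) : ℤ) := by
      rw [uhatG]
      rw [Finset.sum_eq_single_of_mem t₀ (Finset.mem_univ t₀)]
      · rw [if_pos ht₀]
        have e1 : Complex.exp (2 * (Real.pi : ℂ) * Complex.I *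
            (((n / P) * g t₀ : ℕ) : ℂ) / (N : ℂ)) = eL N (((n / P) * g t₀ : ℕ) : ℤ) := by
          rw [eL]; norm_cast
        have e2 : Complex.exp (2 * (Real.pi : ℂ) * Complex.I *
            ((l t₀ * g t₀ : ℕ) : ℂ) / ((N * P : ℕ) : ℂ)) = eL (N * P) ((l t₀ * g t₀ : ℕ) : ℤ) := by
          rw [eL]; norm_cast
        rw [e1, e2]
      · intro b _ hb
        rw [if_neg]
        intro hlb
        exact hb (hl (hlb.trans ht₀.symm))
    rw [if_pos ⟨t₀, ht₀⟩, hval]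
    rw [map_mul, map_mul, Complex.conj_ofReal, eL_conj, eL_conj]
    rw [show (Real.sqrt ((P : ℝ) / (N : ℝ)) : ℂ) * eL N (((n / P) * g t₀ : ℕ) : ℤ)
          * eL (N * P) ((l t₀ * g t₀ : ℕ) : ℤ)
        * ((Real.sqrt ((P : ℝ) / (N : ℝ)) : ℂ) * eL N (-(((n / P) * g t₀ : ℕ) : ℤ))
          * eL (N * P) (-((l t₀ * g t₀ : ℕ) : ℤ)))
      = ((Real.sqrt ((P : ℝ) / (N : ℝ)) : ℂ) * (Real.sqrt ((P : ℝ) / (N : ℝ)) : ℂ))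
        * (eL N (((n / P) * g t₀ : ℕ) : ℤ) * eL N (-(((n / P) * g t₀ : ℕ) : ℤ)))
        * (eL (N * P) ((l t₀ * g t₀ : ℕ) : ℤ) * eL (N * P) (-((l t₀ * g t₀ : ℕ) : ℤ))) by ring]
    rw [← eL_add, ← eL_add, add_neg_cancel, add_neg_cancel, eL_zero, eL_zero]
    rw [← Complex.ofReal_mul, Real.mul_self_sqrt (by positivity)]
    ring
  · rw [if_neg h]
    have : uhatG N P l g n = 0 := by
      rw [uhatG]
      apply Finset.sum_eq_zero
      intro t _
      rw [if_neg fun hlt => h ⟨t, hlt⟩]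
    rw [this, zero_mul]

/-- in the setting of Construction 3, if the admissible-carrier set
`D = Z_P \ I` is a `(P, N, λ)` cyclic difference set over `Z_P`, then
`|θ_U(N·b)|² = P²(N − λ)` whenever `0 < N·b < L` and `P ∤ b`; consequently the maximum
autocorrelation sidelobe over `0 < τ < L` equals `P·√(N(P−N)/(P−1))`. -/
theorem stmt16 (N T lam : ℕ) (hN : 2 ≤ N) (hT : 1 ≤ T)
    (I : Finset ℕ) (hIsub : I ⊆ Finset.range (N + T)) (hIcard : I.card = T)
    (l : Fin N → ℕ) (hlmono : StrictMono l) (hlP : ∀ t, l t < N + T)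
    (hlI : ∀ s < N + T, (s ∉ I ↔ ∃ t, l t = s))
    (hDS : ∀ ε : ℕ, 0 < ε → ε < N + T →
      ((((Finset.range (N + T)).filter (· ∉ I)).image
          (fun x => (x + ε) % (N + T))) ∩
        ((Finset.range (N + T)).filter (· ∉ I))).card = lam)
    (g : Equiv.Perm (ZMod N))
    (U : ℕ → ℂ)
    (hU : ∀ t, U t =
      iudft (N * (N + T)) (uhatG N (N + T) l (fun t => (g ((t : ℕ) : ZMod N)).val)) t) :
    (∀ b : ℕ, 0 < N * b → N * b < N * (N + T) → ¬ (N + T) ∣ b →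
      ‖pcc (N * (N + T)) U U (N * b)‖ ^ 2 =
        ((N + T : ℕ) : ℝ) ^ 2 * ((N : ℝ) - (lam : ℝ))) ∧
    IsGreatest {x : ℝ | ∃ τ : ℕ, 0 < τ ∧ τ < N * (N + T) ∧ x = ‖pcc (N * (N + T)) U U τ‖}
      (((N + T : ℕ) : ℝ) * Real.sqrt ((N : ℝ) * (((N + T : ℕ) : ℝ) - (N : ℝ)) /
        (((N + T : ℕ) : ℝ) - 1))) := by
  set P := N + T with hPdef
  have hP : 0 < P := by omega
  have hP3 : 3 ≤ P := by omega
  have hN0 : 0 < N := by omega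
  set L := N * P with hLdef
  have hL : 0 < L := Nat.mul_pos hN0 hP
  set g' : Fin N → ℕ := fun t => (g ((t : ℕ) : ZMod N)).val with hg'
  set c : ℕ → ℂ := uhatG N P l g' with hc
  set Dset : Finset ℕ := (Finset.range P).filter (· ∉ I) with hDsetdef
  have hDsub : Dset ⊆ Finset.range P := Finset.filter_subset _ _
  have hDcard : Dset.card = N := by
    have h1 : Dset = Finset.range P \ I := by
      ext s
      simp only [hDsetdef, Finset.mem_filter, Finset.mem_sdiff]
    rw [h1, Finset.card_sdiff_of_subset hIsub, Finset.card_range, hIcard]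
    omega
  have hlinj : Function.Injective l := hlmono.injective
  set w : ℕ → ℂ := fun s => if s ∈ Dset then (((P : ℝ) / (N : ℝ) : ℝ) : ℂ) else 0 with hw
  have hmodD : ∀ n : ℕ, ((∃ t, l t = n % P) ↔ n % P ∈ Dset) := by
    intro n
    have hlt : n % P < P := Nat.mod_lt _ hP
    rw [hDsetdef]
    simp only [Finset.mem_filter, Finset.mem_range]
    constructor
    · intro ht; exact ⟨hlt, (hlI (n % P) hlt).mpr ht⟩
    · intro hs; exact (hlI (n % P) hlt).mp hs.2
  have hcc : ∀ n : ℕ, c n * (starRingEnd ℂ) (c n) = w (n % P) := by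
    intro n
    rw [hc, uhatG_mul_conj N P hN0 hP l hlinj g' n, hw]
    exact if_congr (hmodD n) rfl rfl
  have hpcc : ∀ τ : ℕ, pcc L U U τ
      = ∑ n ∈ Finset.range L, w (n % P) * eL L (-((n : ℤ) * τ)) := by
    intro τ
    have h1 : pcc L U U τ = pcc L (iudft L c) (iudft L c) τ := by
      rw [pcc, pcc]
      exact Finset.sum_congr rfl fun t _ => by rw [hU, hU]
    rw [h1, pcc_iudft L hL c τ]
    exact Finset.sum_congr rfl fun n _ => by rw [hcc]
  have eLP : ∀ x : ℤ, eL L ((P : ℤ) * x) = eL N x := by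
    intro x
    rw [show L = P * N from by rw [hLdef, Nat.mul_comm], eL_mul_left P N hP.ne' hN0.ne']
  have eLN : ∀ x : ℤ, eL L ((N : ℤ) * x) = eL P x := by
    intro x; rw [hLdef, eL_mul_left N P hN0.ne' hP.ne']
  have hfact : ∀ τ : ℕ, pcc L U U τ
      = (∑ r ∈ Finset.range N, eL N ((-(τ : ℤ)) * r))
        * (∑ s ∈ Finset.range P, w s * eL L ((-(τ : ℤ)) * s)) := by
    intro τ
    rw [hpcc τ, hLdef, sum_range_mul' N P hP, Finset.sum_mul_sum]
    refine Finset.sum_congr rfl fun r hr => Finset.sum_congr rfl fun s hs => ?_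
    have hsP : s < P := Finset.mem_range.mp hs
    have hmod : (P * r + s) % P = s := by rw [Nat.mul_add_mod, Nat.mod_eq_of_lt hsP]
    have harg : -(((P * r + s : ℕ) : ℤ) * τ) = (P : ℤ) * ((-(τ : ℤ)) * r) + (-(τ : ℤ)) * s := by
      push_cast; ring
    rw [hmod, harg, eL_add, eLP]
    ring
  have hzero : ∀ τ : ℕ, ¬ (N : ℤ) ∣ (τ : ℤ) → pcc L U U τ = 0 := by
    intro τ hdvd
    rw [hfact τ]
    have h1 : ∑ r ∈ Finset.range N, eL N ((-(τ : ℤ)) * r) = 0 := by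
      rw [eL_orth N hN0, if_neg]
      simpa [dvd_neg] using hdvd
    rw [h1, zero_mul]
  set S : ℕ → ℂ := fun b => ∑ s ∈ Dset, eL P ((-(b : ℤ)) * s) with hS
  have hNb : ∀ b : ℕ, pcc L U U (N * b) = (P : ℂ) * S b := by
    intro b
    rw [hfact (N * b)]
    have h1 : ∑ r ∈ Finset.range N, eL N ((-((N * b : ℕ) : ℤ)) * r) = (N : ℂ) := by
      have heach : ∀ r ∈ Finset.range N, eL N ((-((N * b : ℕ) : ℤ)) * r) = 1 := by
        intro r _
        rw [show (-((N * b : ℕ) : ℤ)) * r = (N : ℤ) * (-(b : ℤ) * r) by push_cast; ring,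
          eL_mul_self N hN0.ne']
      rw [Finset.sum_congr rfl heach, Finset.sum_const, Finset.card_range]
      simp
    have h2 : ∑ s ∈ Finset.range P, w s * eL L ((-((N * b : ℕ) : ℤ)) * s)
        = (((P : ℝ) / (N : ℝ) : ℝ) : ℂ) * S b := by
      have heach : ∀ s ∈ Finset.range P, w s * eL L ((-((N * b : ℕ) : ℤ)) * s)
          = if s ∈ Dset then (((P : ℝ) / (N : ℝ) : ℝ) : ℂ) * eL P ((-(b : ℤ)) * s) else 0 := by
        intro s _
        rw [show (-((N * b : ℕ) : ℤ)) * s = (N : ℤ) * ((-(b : ℤ)) * s) by push_cast; ring, eLN]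
        simp only [hw]
        by_cases hsD : s ∈ Dset
        · rw [if_pos hsD, if_pos hsD]
        · rw [if_neg hsD, if_neg hsD, zero_mul]
      rw [Finset.sum_congr rfl heach, Finset.sum_ite_mem, Finset.inter_eq_right.mpr hDsub,
        hS, Finset.mul_sum]
    rw [h1, h2, ← mul_assoc]
    congr 1
    have hNC : (N : ℂ) ≠ 0 := by exact_mod_cast hN0.ne'
    push_cast
    field_simp
  have hcard0 : (Dset.filter (fun s => (s + 0) % P ∈ Dset)).card = N := by
    have h1 : Dset.filter (fun s => (s + 0) % P ∈ Dset) = Dset := by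
      apply Finset.filter_true_of_mem
      intro s hs
      have hsP : s < P := Finset.mem_range.mp (hDsub hs)
      simpa [Nat.mod_eq_of_lt hsP] using hs
    rw [h1, hDcard]
  have hcarde : ∀ ε : ℕ, 0 < ε → ε < P →
      (Dset.filter (fun s => (s + ε) % P ∈ Dset)).card = lam := by
    intro ε he heP
    have hinj : Set.InjOn (fun x => (x + ε) % P) Dset := by
      intro x hx y hy hxy
      have hxP : x < P := Finset.mem_range.mp (hDsub hx)
      have hyP : y < P := Finset.mem_range.mp (hDsub hy)
      simp only at hxy
      rw [mod_two_cases (x + ε) P (by omega), mod_two_cases (y + ε) P (by omega)] at hxy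
      split at hxy <;> split at hxy <;> omega
    have himg : (Dset.image (fun x => (x + ε) % P)) ∩ Dset
        = (Dset.filter (fun s => (s + ε) % P ∈ Dset)).image (fun x => (x + ε) % P) := by
      ext y
      simp only [Finset.mem_inter, Finset.mem_image, Finset.mem_filter]
      constructor
      · rintro ⟨⟨x, hx, rfl⟩, hy⟩
        exact ⟨x, ⟨hx, hy⟩, rfl⟩
      · rintro ⟨x, ⟨hx, hximg⟩, rfl⟩
        exact ⟨⟨x, hx, rfl⟩, hximg⟩
    have hds := hDS ε he heP
    rw [himg, Finset.card_image_of_injOn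
      (hinj.mono (Finset.coe_subset.mpr (Finset.filter_subset _ _)))] at hds
    exact hds
  have hcount : N * N = N + (P - 1) * lam := by
    have h0 := double_sum_shift P hP Dset hDsub (fun _ _ => (1 : ℕ))
    simp only [Finset.sum_const, smul_eq_mul, mul_one, hDcard] at h0
    rw [Finset.range_eq_Ico, Finset.sum_eq_sum_Ico_succ_bot hP, hcard0] at h0
    have h1 : ∀ ε ∈ Finset.Ico 1 P, (Dset.filter (fun s => (s + ε) % P ∈ Dset)).card = lam := by
      intro ε he
      have := Finset.mem_Ico.mp he
      exact hcarde ε (by omega) this.2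
    rw [Finset.sum_congr rfl h1, Finset.sum_const, Nat.card_Ico, smul_eq_mul] at h0
    omega
  have hlamN : lam < N := by
    by_contra hge
    push_neg at hge
    have h1 : N * N ≤ (P - 1) * lam := Nat.mul_le_mul (by omega) hge
    omega
  have hSconj : ∀ b : ℕ, ¬ (P : ℤ) ∣ (b : ℤ) →
      S b * (starRingEnd ℂ) (S b) = (N : ℂ) - (lam : ℂ) := by
    intro b hb
    have hconjS : (starRingEnd ℂ) (S b) = ∑ s' ∈ Dset, eL P ((b : ℤ) * s') := by
      rw [hS, map_sum]
      refine Finset.sum_congr rfl fun s _ => ?_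
      rw [eL_conj]
      congr 1
      ring
    rw [hconjS, hS]
    rw [Finset.sum_mul_sum]
    have hstep : ∀ s ∈ Dset, ∀ s' ∈ Dset,
        eL P ((-(b : ℤ)) * s) * eL P ((b : ℤ) * s') = eL P ((b : ℤ) * s' - (b : ℤ) * s) := by
      intro s _ s' _
      rw [← eL_add]
      congr 1
      ring
    have h0 : (∑ s ∈ Dset, ∑ s' ∈ Dset, eL P ((-(b : ℤ)) * s) * eL P ((b : ℤ) * s'))
        = ∑ s ∈ Dset, ∑ s' ∈ Dset, eL P ((b : ℤ) * s' - (b : ℤ) * s) :=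
      Finset.sum_congr rfl fun s hs => Finset.sum_congr rfl fun s' hs' => hstep s hs s' hs'
    rw [h0, double_sum_shift P hP Dset hDsub (fun s s' => eL P ((b : ℤ) * s' - (b : ℤ) * s))]
    have h2 : ∀ ε ∈ Finset.range P,
        (∑ s ∈ Dset.filter (fun s => (s + ε) % P ∈ Dset),
          eL P ((b : ℤ) * ((s + ε) % P : ℕ) - (b : ℤ) * s))
        = ((Dset.filter (fun s => (s + ε) % P ∈ Dset)).card : ℂ) * eL P ((b : ℤ) * ε) := by
      intro ε _
      have heach : ∀ s ∈ Dset.filter (fun s => (s + ε) % P ∈ Dset),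
          eL P ((b : ℤ) * ((s + ε) % P : ℕ) - (b : ℤ) * s) = eL P ((b : ℤ) * ε) := by
        intro s _
        have h := Nat.div_add_mod (s + ε) P
        have hZ : (P : ℤ) * (((s + ε) / P : ℕ) : ℤ) + (((s + ε) % P : ℕ) : ℤ)
            = ((s : ℤ) + ε) := by exact_mod_cast h
        have harg : (b : ℤ) * ((s + ε) % P : ℕ) - (b : ℤ) * s
            = (b : ℤ) * ε + (P : ℤ) * (-(b : ℤ) * (((s + ε) / P : ℕ) : ℤ)) := by
          linear_combination (b : ℤ) * hZ
        rw [harg, eL_period P hP.ne']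
      rw [Finset.sum_congr rfl heach, Finset.sum_const, nsmul_eq_mul]
    rw [Finset.sum_congr rfl h2]
    have h3 : ∀ ε ∈ Finset.range P,
        ((Dset.filter (fun s => (s + ε) % P ∈ Dset)).card : ℂ) * eL P ((b : ℤ) * ε)
        = (lam : ℂ) * eL P ((b : ℤ) * ε)
          + (if ε = 0 then ((N : ℂ) - lam) * eL P ((b : ℤ) * ε) else 0) := by
      intro ε he
      have heP := Finset.mem_range.mp he
      by_cases h : ε = 0
      · subst h
        rw [hcard0, if_pos rfl]
        ring
      · rw [hcarde ε (by omega) heP, if_neg h, add_zero]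
    rw [Finset.sum_congr rfl h3, Finset.sum_add_distrib, ← Finset.mul_sum, eL_orth P hP,
      if_neg (by simpa using hb), Finset.sum_ite_eq' (Finset.range P) 0
        (fun ε => ((N : ℂ) - lam) * eL P ((b : ℤ) * ε)),
      if_pos (Finset.mem_range.mpr hP)]
    simp [eL_zero]
  have hkey : ∀ b : ℕ, ¬ (P : ℤ) ∣ (b : ℤ) →
      ‖pcc L U U (N * b)‖ ^ 2 = ((P : ℕ) : ℝ) ^ 2 * ((N : ℝ) - (lam : ℝ)) := by
    intro b hb
    rw [hNb b, norm_mul, mul_pow]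
    have h1 : ‖((P : ℕ) : ℂ)‖ = ((P : ℕ) : ℝ) := by
      rw [Complex.norm_natCast]
    have h2 : ‖S b‖ ^ 2 = (N : ℝ) - lam := by
      have h3 := hSconj b hb
      rw [Complex.mul_conj] at h3
      have h5 : Complex.normSq (S b) = (N : ℝ) - lam := by
        have h4 : (Complex.normSq (S b) : ℂ) = (((N : ℝ) - lam : ℝ) : ℂ) := by
          rw [h3]; push_cast; ring
        exact_mod_cast h4
      rw [Complex.sq_norm, h5]
    rw [h1, h2]
  have hreal : (N : ℝ) - lam = (N : ℝ) * (((P : ℕ) : ℝ) - N) / (((P : ℕ) : ℝ) - 1) := by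
    have h1 : ((N : ℝ) * N) = N + (((P : ℕ) - 1 : ℕ) : ℝ) * lam := by exact_mod_cast hcount
    rw [Nat.cast_sub (by omega)] at h1
    push_cast at h1
    have hP1 : ((P : ℕ) : ℝ) - 1 ≠ 0 := by
      have : (3 : ℝ) ≤ ((P : ℕ) : ℝ) := by exact_mod_cast hP3
      linarith
    field_simp
    linear_combination h1
  have hlamNR : (0 : ℝ) ≤ (N : ℝ) - lam := by
    have : (lam : ℝ) ≤ N := by exact_mod_cast hlamN.le
    linarith
  have hnormval : ∀ b : ℕ, ¬ (P : ℤ) ∣ (b : ℤ) →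
      ‖pcc L U U (N * b)‖ = ((P : ℕ) : ℝ) * Real.sqrt ((N : ℝ) - lam) := by
    intro b hb
    have h2 := hkey b hb
    have h3 : ‖pcc L U U (N * b)‖ = Real.sqrt (‖pcc L U U (N * b)‖ ^ 2) :=
      (Real.sqrt_sq (norm_nonneg _)).symm
    rw [h3, h2, Real.sqrt_mul (by positivity), Real.sqrt_sq (by positivity)]
  have hBval : Real.sqrt ((N : ℝ) * (((P : ℕ) : ℝ) - N) / (((P : ℕ) : ℝ) - 1))
      = Real.sqrt ((N : ℝ) - lam) := by rw [hreal]
  constructor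
  · intro b hb1 hb2 hb3
    exact hkey b (by simpa [Int.natCast_dvd_natCast] using hb3)
  · constructor
    · refine ⟨N, hN0, ?_, ?_⟩
      · rw [hLdef] at *
        exact (Nat.lt_mul_iff_one_lt_right hN0).mpr (by omega)
      · have hnd1 : ¬ (P : ℤ) ∣ ((1 : ℕ) : ℤ) := by
          rw [Int.natCast_dvd_natCast]
          intro h
          have := Nat.le_of_dvd one_pos h
          omega
        have hv := hnormval 1 hnd1
        rw [Nat.mul_one] at hv
        rw [hBval, hv]
    · rintro x ⟨τ, hτ0, hτL, rfl⟩
      by_cases hdvd : N ∣ τ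
      · obtain ⟨b, rfl⟩ := hdvd
        have hb0 : 0 < b := by
          rcases Nat.eq_zero_or_pos b with h | h
          · subst h; simp at hτ0
          · exact h
        have hbP : b < P := by
          rw [hLdef] at hτL
          exact Nat.lt_of_mul_lt_mul_left hτL
        have hnd : ¬ (P : ℤ) ∣ (b : ℤ) := by
          rw [Int.natCast_dvd_natCast]
          intro h
          have := Nat.le_of_dvd hb0 h
          omega
        rw [hnormval b hnd, hBval]
      · have h0 : pcc L U U τ = 0 := by
          apply hzero
          rw [Int.natCast_dvd_natCast]
          exact hdvd
        rw [h0, norm_zero]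
        positivity
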